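/- arXiv:1203.4759 — 2 statements merged into one kernel-verified Lean document; each statement's English description precedes it below -/
import Mathlib

section
/- Let K ⊆ ℝ be open and invex with respect to η, and f : K → ℝ differentiable with a, a + η(b,a) ∈ K and η(b,a) > 0. If |f'| is preinvex on K with respect to η, then |(1/η(b,a)) ∫_a^{a+η(b,a)} f(x) dx − f((2a + η(b,a))/2)| ≤ (η(b,a)/8)(|f'(a)| + |f'(b)|). -/
/-!
Substituting `x = a + t * η b a` turns the claim into one about `g t = f (a + t * η b a)` on
`[0, 1]`, whose derivative is bounded by the chord `(1 - t) * A + t * B` with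
`A = η b a * |f' a|`, `B = η b a * |f' b|`. Integration by parts against the Peano kernel
(`t` on `[0, 1/2]`, `t - 1` on `[1/2, 1]`) writes `g (1/2) - ∫₀¹ g` as `∫ kernel * g'`, and
integrating `|kernel|` against the chord gives `(A + B) / 8`.
-/

open MeasureTheory intervalIntegral

open Set
open scoped Interval

theorem intervalIntegrable_deriv_of_norm_le {E : Type*} [NormedAddCommGroup E] [NormedSpace ℝ E]
    [CompleteSpace E] {f f' : ℝ → E} {h : ℝ → ℝ} {a b : ℝ}
    (hf : ∀ x ∈ [[a, b]], HasDerivAt f (f' x) x) (hf'h : ∀ x ∈ [[a, b]], ‖f' x‖ ≤ h x)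
    (hh : IntervalIntegrable h volume a b) : IntervalIntegrable f' volume a b := by
  rw [intervalIntegrable_iff'] at hh ⊢
  refine Integrable.mono' hh ?_ ?_
  · refine (aestronglyMeasurable_deriv f _).congr ?_
    filter_upwards [ae_restrict_mem measurableSet_uIcc] with x hx
    exact (hf x hx).deriv
  · filter_upwards [ae_restrict_mem measurableSet_uIcc] with x hx
    exact hf'h x hx

theorem integral_sub_mul_deriv (c : ℝ) {f f' : ℝ → ℝ} {a b : ℝ}
    (hf : ∀ x ∈ [[a, b]], HasDerivAt f (f' x) x) (hf' : IntervalIntegrable f' volume a b) :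
    ∫ x in a..b, (x - c) * f' x = (b - c) * f b - (a - c) * f a - ∫ x in a..b, f x := by
  simpa using integral_mul_deriv_eq_deriv_mul (u' := fun _ => 1)
    (fun x _ => (hasDerivAt_id x).sub_const c) hf intervalIntegrable_const hf'

theorem midpoint_rule_error_eq_integral_mul_deriv {f f' : ℝ → ℝ} {a b : ℝ}
    (hf : ∀ x ∈ [[a, b]], HasDerivAt f (f' x) x) (hf' : IntervalIntegrable f' volume a b) :
    (b - a) * f ((a + b) / 2) - ∫ x in a..b, f x =
      (∫ x in a..(a + b) / 2, (x - a) * f' x) + ∫ x in (a + b) / 2..b, (x - b) * f' x := by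
  have hmid : (a + b) / 2 ∈ [[a, b]] := by
    rcases le_total a b with h | h
    · exact mem_uIcc.2 (Or.inl ⟨by linarith, by linarith⟩)
    · exact mem_uIcc.2 (Or.inr ⟨by linarith, by linarith⟩)
  have hleft := uIcc_subset_uIcc_left hmid
  have hright := uIcc_subset_uIcc_right hmid
  have hfi : IntervalIntegrable f volume a b :=
    (HasDerivAt.continuousOn hf).intervalIntegrable
  rw [integral_sub_mul_deriv a (fun x hx => hf x (hleft hx)) (hf'.mono_set hleft),
    integral_sub_mul_deriv b (fun x hx => hf x (hright hx)) (hf'.mono_set hright),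
    ← integral_add_adjacent_intervals (hfi.mono_set hleft) (hfi.mono_set hright)]
  ring

theorem integral_mul_chord_left (A B : ℝ) :
    ∫ t in (0 : ℝ)..1 / 2, t * ((1 - t) * A + t * B) = A / 12 + B / 24 := by
  have : (fun t : ℝ => t * ((1 - t) * A + t * B)) = fun t => A * t + (B - A) * t ^ 2 := by
    ext t; ring
  rw [this, intervalIntegral.integral_add ((by fun_prop : Continuous _).intervalIntegrable _ _)
    ((by fun_prop : Continuous _).intervalIntegrable _ _),
    intervalIntegral.integral_const_mul, intervalIntegral.integral_const_mul, integral_id,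
    integral_pow]
  norm_num
  ring

theorem integral_mul_chord_right (A B : ℝ) :
    ∫ t in (1 / 2 : ℝ)..1, (1 - t) * ((1 - t) * A + t * B) = A / 24 + B / 12 := by
  have := integral_comp_sub_left (fun s : ℝ => s * (s * A + (1 - s) * B)) (1 : ℝ)
    (a := 1 / 2) (b := 1)
  norm_num at this
  rw [this, add_comm, ← integral_mul_chord_left B A]
  congr 1; ext; ring

theorem abs_midpoint_sub_integral_le_of_abs_deriv_le_chord {g g' : ℝ → ℝ} {A B : ℝ}
    (hg : ∀ t ∈ Icc (0 : ℝ) 1, HasDerivAt g (g' t) t)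
    (hg' : ∀ t ∈ Icc (0 : ℝ) 1, |g' t| ≤ (1 - t) * A + t * B) :
    |g (1 / 2) - ∫ t in (0 : ℝ)..1, g t| ≤ (A + B) / 8 := by
  rw [← uIcc_of_le zero_le_one] at hg
  have hint : IntervalIntegrable g' volume 0 1 :=
    intervalIntegrable_deriv_of_norm_le hg
      (fun t ht => hg' t (by rwa [uIcc_of_le zero_le_one] at ht))
      (Continuous.intervalIntegrable (by fun_prop) _ _)
  have hid := midpoint_rule_error_eq_integral_mul_deriv hg hint
  norm_num at hid
  rw [hid]
  calc _ ≤ |∫ t in (0 : ℝ)..1 / 2, t * g' t| + |∫ t in (1 / 2 : ℝ)..1, (t - 1) * g' t| :=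
        abs_add_le _ _
    _ ≤ (A / 12 + B / 24) + (A / 24 + B / 12) := by
        rw [← integral_mul_chord_left, ← integral_mul_chord_right]
        gcongr ?_ + ?_
        · rw [← Real.norm_eq_abs]
          refine norm_integral_le_of_norm_le (by norm_num) (ae_of_all _ fun t ht => ?_)
            (Continuous.intervalIntegrable (by fun_prop) _ _)
          have := hg' t ⟨ht.1.le, by linarith [ht.2]⟩
          rw [Real.norm_eq_abs, abs_mul, abs_of_nonneg ht.1.le]
          exact mul_le_mul_of_nonneg_left this ht.1.le
        · rw [← Real.norm_eq_abs]
          refine norm_integral_le_of_norm_le (by norm_num) (ae_of_all _ fun t ht => ?_)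
            (Continuous.intervalIntegrable (by fun_prop) _ _)
          have := hg' t ⟨by linarith [ht.1], ht.2⟩
          rw [Real.norm_eq_abs, abs_mul, abs_sub_comm, abs_of_nonneg (by linarith [ht.2])]
          exact mul_le_mul_of_nonneg_left this (by linarith [ht.2])
    _ = (A + B) / 8 := by ring

theorem hh_left_preinvex_abs_deriv_general
    (K : Set ℝ) (η : ℝ → ℝ → ℝ)
    (f f' : ℝ → ℝ) (a b : ℝ)
    (hinvex : ∀ t ∈ Set.Icc (0 : ℝ) 1, a + t * η b a ∈ K)
    (hf : ∀ x ∈ K, HasDerivAt f (f' x) x)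
    (hη : 0 < η b a)
    (hpre : ∀ t ∈ Set.Icc (0 : ℝ) 1,
      |f' (a + t * η b a)| ≤ (1 - t) * |f' a| + t * |f' b|) :
    |(1 / η b a) * (∫ x in a..(a + η b a), f x) - f ((2 * a + η b a) / 2)|
      ≤ (η b a / 8) * (|f' a| + |f' b|) := by
  set c := η b a
  have hderiv : ∀ t ∈ Icc (0 : ℝ) 1,
      HasDerivAt (fun t => f (a + t * c)) (c * f' (a + t * c)) t := fun t ht => by
    simpa [Function.comp_def, mul_comm] using
      (hf _ (hinvex t ht)).comp t (((hasDerivAt_id t).mul_const c).const_add a)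
  have hbound : ∀ t ∈ Icc (0 : ℝ) 1,
      |c * f' (a + t * c)| ≤ (1 - t) * (c * |f' a|) + t * (c * |f' b|) := fun t ht => by
    rw [abs_mul, abs_of_pos hη]
    nlinarith [hpre t ht]
  have hrescale : ∫ t in (0 : ℝ)..1, f (a + t * c) = c⁻¹ * ∫ x in a..(a + c), f x := by
    simp_rw [mul_comm _ c]
    rw [integral_comp_add_mul _ hη.ne']
    simp
  calc |(1 / c) * (∫ x in a..(a + c), f x) - f ((2 * a + c) / 2)|
      = |f (a + 1 / 2 * c) - ∫ t in (0 : ℝ)..1, f (a + t * c)| := by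
        rw [hrescale, abs_sub_comm, one_div]; ring_nf
    _ ≤ (c * |f' a| + c * |f' b|) / 8 :=
        abs_midpoint_sub_integral_le_of_abs_deriv_le_chord hderiv hbound
    _ = (c / 8) * (|f' a| + |f' b|) := by ring

theorem hh_left_preinvex_abs_deriv
    (K : Set ℝ) (hK : IsOpen K) (η : ℝ → ℝ → ℝ)
    (f f' : ℝ → ℝ) (a b : ℝ)
    (hinvex : ∀ t ∈ Set.Icc (0 : ℝ) 1, a + t * η b a ∈ K)
    (hf : ∀ x ∈ K, HasDerivAt f (f' x) x)
    (hη : 0 < η b a)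
    (hpre : ∀ t ∈ Set.Icc (0 : ℝ) 1,
      |f' (a + t * η b a)| ≤ (1 - t) * |f' a| + t * |f' b|) :
    |(1 / η b a) * (∫ x in a..(a + η b a), f x) - f ((2 * a + η b a) / 2)|
      ≤ (η b a / 8) * (|f' a| + |f' b|) :=
  hh_left_preinvex_abs_deriv_general K η f f' a b hinvex hf hη hpre
end

section
/- Let q ≥ 1 and suppose |f'|^q is preinvex on K. Then |(1/η(b,a)) ∫_a^{a+η(b,a)} f(x) dx − f((2a+η(b,a))/2)| ≤ (η(b,a)/8) [ ((2|f'(a)|^q + |f'(b)|^q)/3)^{1/q} + ((|f'(a)|^q + 2|f'(b)|^q)/3)^{1/q} ]. -/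
/-!
With `g t = f (a + t * η b a)`, the Montgomery identity for `g` at the midpoint of `[0, 1]` writes
the left-hand side as `η b a * |∫_{1/2}^1 (1 - t) f' (a + t η) dt - ∫_0^{1/2} t f' (a + t η) dt|`.
Both weights have mass `1/8`, so the power mean inequality bounds each integral by `1/8` times the
`q`-th root of the weighted mean of `|f'|^q`, and preinvexity bounds these two means by
`(2 |f' a|^q + |f' b|^q) / 3` and `(|f' a|^q + 2 |f' b|^q) / 3`.
-/

open MeasureTheory intervalIntegral Set

theorem Real.rpow_one_sub_mul_mul_rpow {x y q : ℝ} (hx : 0 ≤ x) (hy : 0 ≤ y) :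
    x ^ (1 - 1 / q) * (x * y) ^ (1 / q) = x * y ^ (1 / q) := by
  rw [Real.mul_rpow hx hy, ← mul_assoc, ← Real.rpow_add' hx (by simp), sub_add_cancel,
    Real.rpow_one]

theorem Real.le_rpow_one_div_of_rpow_le {x y q : ℝ} (hx : 0 ≤ x) (hq : 0 < q)
    (h : x ^ q ≤ y) : x ≤ y ^ (1 / q) := by
  rw [one_div, Real.le_rpow_inv_iff_of_pos hx ((Real.rpow_nonneg hx q).trans h) hq]
  exact h

theorem ContinuousOn.memLp_restrict_Ioc {f : ℝ → ℝ} {c d : ℝ}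
    (hf : ContinuousOn f (Icc c d)) (p : ENNReal) : MemLp f p (volume.restrict (Ioc c d)) := by
  obtain ⟨C, hC⟩ := isCompact_Icc.exists_bound_of_continuousOn hf
  exact MemLp.of_bound ((hf.mono Ioc_subset_Icc_self).aestronglyMeasurable measurableSet_Ioc) C
    (ae_restrict_of_forall_mem measurableSet_Ioc fun t ht => hC t (Ioc_subset_Icc_self ht))

theorem integral_mul_rpow_one_div_le {q c d : ℝ} (hq : 1 ≤ q) (hcd : c ≤ d)
    {w φ : ℝ → ℝ} (hw : ContinuousOn w (Icc c d)) (hφ : ContinuousOn φ (Icc c d))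
    (hw0 : ∀ t ∈ Icc c d, 0 ≤ w t) (hφ0 : ∀ t ∈ Icc c d, 0 ≤ φ t) :
    ∫ t in c..d, w t * φ t ^ (1 / q) ≤
      (∫ t in c..d, w t) ^ (1 - 1 / q) * (∫ t in c..d, w t * φ t) ^ (1 / q) := by
  rcases hq.eq_or_lt with rfl | hq
  · simp
  set p := q.conjExponent
  have hpq : p.HolderConjugate q := (Real.HolderConjugate.conjExponent hq).symm
  have hsum : 1 / p + 1 / q = 1 := by simpa using hpq.one_div_add_one_div
  have hwφ : ∀ᵐ t ∂volume.restrict (Ioc c d), 0 ≤ w t ∧ 0 ≤ φ t :=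
    ae_restrict_of_forall_mem measurableSet_Ioc fun t ht =>
      ⟨hw0 t (Ioc_subset_Icc_self ht), hφ0 t (Ioc_subset_Icc_self ht)⟩
  -- Hölder for `w ^ (1/p)` and `(w * φ) ^ (1/q)`, whose product is `w * φ ^ (1/q)`
  have holder := integral_mul_le_Lp_mul_Lq_of_nonneg hpq
    (f := fun t => w t ^ (1 / p)) (g := fun t => (w t * φ t) ^ (1 / q))
    (hwφ.mono fun t ht => Real.rpow_nonneg ht.1 _)
    (hwφ.mono fun t ht => Real.rpow_nonneg (mul_nonneg ht.1 ht.2) _)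
    ((hw.rpow_const fun t ht => Or.inr hpq.one_div_nonneg).memLp_restrict_Ioc _)
    (((hw.mul hφ).rpow_const fun t ht => Or.inr hpq.symm.one_div_nonneg).memLp_restrict_Ioc _)
  rw [integral_of_le hcd, integral_of_le hcd, integral_of_le hcd,
    show 1 - 1 / q = 1 / p by linarith]
  calc ∫ t in Ioc c d, w t * φ t ^ (1 / q)
      = ∫ t in Ioc c d, w t ^ (1 / p) * (w t * φ t) ^ (1 / q) :=
        MeasureTheory.integral_congr_ae <| hwφ.mono fun t ⟨hwt, hφt⟩ => by
          dsimp only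
          rw [Real.mul_rpow hwt hφt, ← mul_assoc,
            ← Real.rpow_add' hwt (by rw [hsum]; exact one_ne_zero), hsum, Real.rpow_one]
    _ ≤ _ := holder
    _ = _ := by
      congr 2 <;> refine MeasureTheory.integral_congr_ae <| hwφ.mono fun t ⟨hwt, hφt⟩ => ?_
      all_goals dsimp only
      · rw [← Real.rpow_mul hwt, one_div_mul_cancel hpq.ne_zero, Real.rpow_one]
      · rw [← Real.rpow_mul (mul_nonneg hwt hφt), one_div_mul_cancel hpq.symm.ne_zero,
          Real.rpow_one]

theorem abs_integral_mul_le_of_abs_rpow_le {q c d : ℝ} (hq : 1 ≤ q) (hcd : c ≤ d)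
    {w F φ : ℝ → ℝ} (hw : ContinuousOn w (Icc c d)) (hφ : ContinuousOn φ (Icc c d))
    (hw0 : ∀ t ∈ Icc c d, 0 ≤ w t) (hF : ∀ t ∈ Icc c d, |F t| ^ q ≤ φ t) :
    |∫ t in c..d, w t * F t| ≤
      (∫ t in c..d, w t) ^ (1 - 1 / q) * (∫ t in c..d, w t * φ t) ^ (1 / q) := by
  have hφ0 : ∀ t ∈ Icc c d, 0 ≤ φ t := fun t ht =>
    (Real.rpow_nonneg (abs_nonneg _) q).trans (hF t ht)
  rw [← Real.norm_eq_abs]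
  refine le_trans ?_ (integral_mul_rpow_one_div_le hq hcd hw hφ hw0 hφ0)
  refine norm_integral_le_of_norm_le hcd (ae_of_all _ fun t ht => ?_) ?_
  · have ht : t ∈ Icc c d := Ioc_subset_Icc_self ht
    rw [Real.norm_eq_abs, abs_mul, abs_of_nonneg (hw0 t ht)]
    exact mul_le_mul_of_nonneg_left
      (Real.le_rpow_one_div_of_rpow_le (abs_nonneg _) (by linarith) (hF t ht)) (hw0 t ht)
  · refine ContinuousOn.intervalIntegrable ?_
    rw [uIcc_of_le hcd]
    exact hw.mul (hφ.rpow_const fun t ht => Or.inr (by positivity))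

theorem intervalIntegrable_of_hasDerivAt_of_abs_le {g g' ψ : ℝ → ℝ} {c d : ℝ}
    (hg : ∀ t ∈ uIcc c d, HasDerivAt g (g' t) t) (hψ : IntervalIntegrable ψ volume c d)
    (hle : ∀ t ∈ uIcc c d, |g' t| ≤ ψ t) : IntervalIntegrable g' volume c d := by
  refine hψ.mono_fun' ?_ (ae_restrict_of_forall_mem measurableSet_uIoc fun t ht =>
    hle t (uIoc_subset_uIcc ht))
  exact (measurable_deriv g).aestronglyMeasurable.congr
    (ae_restrict_of_forall_mem measurableSet_uIoc fun t ht => (hg t (uIoc_subset_uIcc ht)).deriv)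

theorem montgomery_identity {g g' : ℝ → ℝ} {c m d : ℝ} (hcm : c ≤ m) (hmd : m ≤ d)
    (hg : ∀ t ∈ Icc c d, HasDerivAt g (g' t) t) (hg' : IntervalIntegrable g' volume c d) :
    (∫ t in c..d, g t) - (d - c) * g m =
      (∫ t in m..d, (d - t) * g' t) - ∫ t in c..m, (t - c) * g' t := by
  have hcm' : uIcc c m ⊆ Icc c d := by rw [uIcc_of_le hcm]; exact Icc_subset_Icc_right hmd
  have hmd' : uIcc m d ⊆ Icc c d := by rw [uIcc_of_le hmd]; exact Icc_subset_Icc_left hcm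
  have hgc : ContinuousOn g (Icc c d) := fun t ht => (hg t ht).continuousAt.continuousWithinAt
  have hcd : uIcc c d = Icc c d := uIcc_of_le (hcm.trans hmd)
  have left : ∫ t in c..m, (t - c) * g' t =
      (m - c) * g m - (c - c) * g c - ∫ t in c..m, 1 * g t :=
    integral_mul_deriv_eq_deriv_mul (fun t _ => (hasDerivAt_id' t).sub_const c)
      (fun t ht => hg t (hcm' ht)) intervalIntegrable_const (hg'.mono_set (hcd ▸ hcm'))
  have right : ∫ t in m..d, (d - t) * g' t =
      (d - d) * g d - (d - m) * g m - ∫ t in m..d, -1 * g t :=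
    integral_mul_deriv_eq_deriv_mul (fun t _ => (hasDerivAt_id' t).const_sub d)
      (fun t ht => hg t (hmd' ht)) intervalIntegrable_const (hg'.mono_set (hcd ▸ hmd'))
  have split := integral_add_adjacent_intervals ((hgc.mono hcm').intervalIntegrable (μ := volume))
    (hgc.mono hmd').intervalIntegrable
  simp only [one_mul, neg_one_mul, sub_self, zero_mul, intervalIntegral.integral_neg] at left right
  linarith

theorem integral_mul_affine_zero_half (A B : ℝ) :
    ∫ t in (0 : ℝ)..1 / 2, t * ((1 - t) * A + t * B) = 1 / 8 * ((2 * A + B) / 3) := by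
  have e : ∀ t : ℝ, t * ((1 - t) * A + t * B) = A * t + (B - A) * t ^ 2 := fun t => by ring
  rw [integral_congr fun t _ => e t, intervalIntegral.integral_add
    ((by fun_prop : Continuous fun t : ℝ => A * t).intervalIntegrable _ _)
    ((by fun_prop : Continuous fun t : ℝ => (B - A) * t ^ 2).intervalIntegrable _ _),
    intervalIntegral.integral_const_mul, intervalIntegral.integral_const_mul, integral_id,
    integral_pow]
  ring

theorem integral_one_sub_mul_affine_half_one (A B : ℝ) :
    ∫ t in (1 / 2 : ℝ)..1, (1 - t) * ((1 - t) * A + t * B) = 1 / 8 * ((A + 2 * B) / 3) := by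
  have e : ∀ t : ℝ, (1 - t) * ((1 - t) * A + t * B) = A - ((2 * A - B) * t + (B - A) * t ^ 2) :=
    fun t => by ring
  rw [integral_congr fun t _ => e t, intervalIntegral.integral_sub intervalIntegrable_const
    ((by fun_prop : Continuous fun t : ℝ => (2 * A - B) * t + (B - A) * t ^ 2).intervalIntegrable
      _ _),
    intervalIntegral.integral_add
    ((by fun_prop : Continuous fun t : ℝ => (2 * A - B) * t).intervalIntegrable _ _)
    ((by fun_prop : Continuous fun t : ℝ => (B - A) * t ^ 2).intervalIntegrable _ _),
    intervalIntegral.integral_const_mul, intervalIntegral.integral_const_mul, integral_id,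
    integral_pow, intervalIntegral.integral_const]
  simp only [smul_eq_mul]
  ring

theorem abs_integral_zero_half_mul_le {q A B : ℝ} {F : ℝ → ℝ} (hq : 1 ≤ q)
    (hF : ∀ t ∈ Icc (0 : ℝ) 1, |F t| ^ q ≤ (1 - t) * A + t * B) :
    |∫ t in (0 : ℝ)..1 / 2, t * F t| ≤ 1 / 8 * ((2 * A + B) / 3) ^ (1 / q) := by
  have hA : 0 ≤ A := by simpa using (Real.rpow_nonneg (abs_nonneg _) q).trans (hF 0 (by simp))
  have hB : 0 ≤ B := by simpa using (Real.rpow_nonneg (abs_nonneg _) q).trans (hF 1 (by simp))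
  have := abs_integral_mul_le_of_abs_rpow_le (c := 0) (d := 1 / 2) (w := fun t => t) hq
    (by norm_num) (continuousOn_id' _) (by fun_prop) (fun t ht => ht.1)
    fun t ht => hF t ⟨ht.1, ht.2.trans (by norm_num)⟩
  rwa [integral_mul_affine_zero_half, show ∫ t in (0 : ℝ)..1 / 2, t = 1 / 8 by norm_num,
    Real.rpow_one_sub_mul_mul_rpow (by norm_num) (by positivity)] at this

theorem abs_integral_half_one_one_sub_mul_le {q A B : ℝ} {F : ℝ → ℝ} (hq : 1 ≤ q)
    (hF : ∀ t ∈ Icc (0 : ℝ) 1, |F t| ^ q ≤ (1 - t) * A + t * B) :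
    |∫ t in (1 / 2 : ℝ)..1, (1 - t) * F t| ≤ 1 / 8 * ((A + 2 * B) / 3) ^ (1 / q) := by
  have hA : 0 ≤ A := by simpa using (Real.rpow_nonneg (abs_nonneg _) q).trans (hF 0 (by simp))
  have hB : 0 ≤ B := by simpa using (Real.rpow_nonneg (abs_nonneg _) q).trans (hF 1 (by simp))
  have := abs_integral_mul_le_of_abs_rpow_le (c := 1 / 2) (d := 1) (w := fun t => 1 - t) hq
    (by norm_num) (by fun_prop) (by fun_prop) (fun t ht => sub_nonneg.2 ht.2)
    fun t ht => hF t ⟨(by norm_num : (0 : ℝ) ≤ 1 / 2).trans ht.1, ht.2⟩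
  have hw : ∫ t in (1 / 2 : ℝ)..1, (1 - t) = 1 / 8 := by
    rw [intervalIntegral.integral_sub intervalIntegrable_const intervalIntegrable_id]
    norm_num
  rwa [integral_one_sub_mul_affine_half_one, hw,
    Real.rpow_one_sub_mul_mul_rpow (by norm_num) (by positivity)] at this

theorem HasDerivAt.comp_add_mul {f f' : ℝ → ℝ} {a h t : ℝ}
    (hf : HasDerivAt f (f' (a + t * h)) (a + t * h)) :
    HasDerivAt (fun t => f (a + t * h)) (h * f' (a + t * h)) t := by
  simpa [Function.comp_def, mul_comm] using hf.comp t (((hasDerivAt_id' t).mul_const h).const_add a)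

theorem average_sub_apply_midpoint_eq {f f' : ℝ → ℝ} {a h : ℝ} (hh : h ≠ 0)
    (hf : ∀ t ∈ Icc (0 : ℝ) 1, HasDerivAt f (f' (a + t * h)) (a + t * h))
    (hint : IntervalIntegrable (fun t => h * f' (a + t * h)) volume 0 1) :
    1 / h * (∫ x in a..a + h, f x) - f ((2 * a + h) / 2) =
      h * ((∫ t in (1 / 2 : ℝ)..1, (1 - t) * f' (a + t * h)) -
        ∫ t in (0 : ℝ)..1 / 2, t * f' (a + t * h)) := by
  have key := montgomery_identity (c := 0) (m := 1 / 2) (d := 1) (by norm_num) (by norm_num)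
    (fun t ht => (hf t ht).comp_add_mul) hint
  simp only [sub_zero, one_mul, mul_left_comm _ h, intervalIntegral.integral_const_mul,
    ← mul_sub] at key
  rw [← key, show (2 * a + h) / 2 = a + 1 / 2 * h by ring]
  simp [mul_comm _ h, hh]

theorem hh_left_preinvex_q_pow_deriv_general
    (K : Set ℝ) (η : ℝ → ℝ → ℝ)
    (f f' : ℝ → ℝ) (a b : ℝ) (q : ℝ) (hq : 1 ≤ q)
    (hinvex : ∀ t ∈ Set.Icc (0 : ℝ) 1, a + t * η b a ∈ K)
    (hf : ∀ x ∈ K, HasDerivAt f (f' x) x)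
    (hη : 0 < η b a)
    (hpre : ∀ t ∈ Set.Icc (0 : ℝ) 1,
      |f' (a + t * η b a)| ^ q ≤ (1 - t) * |f' a| ^ q + t * |f' b| ^ q) :
    |(1 / η b a) * (∫ x in a..(a + η b a), f x) - f ((2 * a + η b a) / 2)|
      ≤ (η b a / 8) *
        (((2 * |f' a| ^ q + |f' b| ^ q) / 3) ^ (1 / q) +
         ((|f' a| ^ q + 2 * |f' b| ^ q) / 3) ^ (1 / q)) := by
  set h := η b a
  have hderiv (t : ℝ) (ht : t ∈ Icc (0 : ℝ) 1) : HasDerivAt f (f' (a + t * h)) (a + t * h) :=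
    hf _ (hinvex t ht)
  have hint : IntervalIntegrable (fun t => h * f' (a + t * h)) volume 0 1 := by
    rw [← uIcc_of_le zero_le_one] at hderiv hpre
    refine intervalIntegrable_of_hasDerivAt_of_abs_le
      (ψ := fun t => h * ((1 - t) * |f' a| ^ q + t * |f' b| ^ q) ^ (1 / q))
      (fun t ht => (hderiv t ht).comp_add_mul) ?_ fun t ht => ?_
    · exact (by fun_prop (disch := positivity) : Continuous _).intervalIntegrable _ _
    · rw [abs_mul, abs_of_pos hη]
      exact mul_le_mul_of_nonneg_left
        (Real.le_rpow_one_div_of_rpow_le (abs_nonneg _) (by linarith) (hpre t ht)) hη.le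
  rw [average_sub_apply_midpoint_eq hη.ne' hderiv hint, abs_mul, abs_of_pos hη]
  calc _ ≤ h * (|∫ t in (1 / 2 : ℝ)..1, (1 - t) * f' (a + t * h)| +
        |∫ t in (0 : ℝ)..1 / 2, t * f' (a + t * h)|) :=
        mul_le_mul_of_nonneg_left (abs_sub _ _) hη.le
    _ ≤ h * (1 / 8 * ((|f' a| ^ q + 2 * |f' b| ^ q) / 3) ^ (1 / q) +
        1 / 8 * ((2 * |f' a| ^ q + |f' b| ^ q) / 3) ^ (1 / q)) := by
      gcongr
      exacts [abs_integral_half_one_one_sub_mul_le hq hpre, abs_integral_zero_half_mul_le hq hpre]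
    _ = _ := by ring

theorem hh_left_preinvex_q_pow_deriv
    (K : Set ℝ) (hK : IsOpen K) (η : ℝ → ℝ → ℝ)
    (f f' : ℝ → ℝ) (a b : ℝ) (q : ℝ) (hq : 1 ≤ q)
    (hinvex : ∀ t ∈ Set.Icc (0 : ℝ) 1, a + t * η b a ∈ K)
    (hf : ∀ x ∈ K, HasDerivAt f (f' x) x)
    (hη : 0 < η b a)
    (hpre : ∀ t ∈ Set.Icc (0 : ℝ) 1,
      |f' (a + t * η b a)| ^ q ≤ (1 - t) * |f' a| ^ q + t * |f' b| ^ q) :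
    |(1 / η b a) * (∫ x in a..(a + η b a), f x) - f ((2 * a + η b a) / 2)|
      ≤ (η b a / 8) *
        (((2 * |f' a| ^ q + |f' b| ^ q) / 3) ^ (1 / q) +
         ((|f' a| ^ q + 2 * |f' b| ^ q) / 3) ^ (1 / q)) :=
  hh_left_preinvex_q_pow_deriv_general K η f f' a b q hq hinvex hf hη hpre
end
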